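/- arXiv:2305.05506 — 2 statements merged into one kernel-verified Lean document; each statement's English description precedes it below -/
import Mathlib

section
/- For every ℓ ∈ {0,…,n} and every σ' ∈ {0,1}^m, the backward metric defined by the backward recursion satisfies β_ℓ(σ') = Σ_{(d_{ℓ+1},…,d_n)∈{0,1}^{n−ℓ}} (Π_{i=ℓ+1}^{n} π(d_i)) · Q(t | σ' ∨ ⋁_{i=ℓ+1}^{n}(d_i ∧ a_i)). In particular, β_0 evaluated at the all-zero vector equals Pr(T = t) = Σ_{d∈{0,1}^n} (Π_{i=1}^n π(d_i)) Q(t | s(d)). -/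
/-- The prior `π` on `{0,1}`: `π(1) = δ`, `π(0) = 1 − δ`. -/
noncomputable def fedgtPrior (δ : ℝ) (b : Bool) : ℝ := if b then δ else 1 - δ

/-- Backward metrics of the BCJR algorithm, computed backwards from depth `n`:
`fedgtBetaRev k` is the backward metric at depth `n − k`, i.e. `β_n(σ) = Q(t|σ)` and
`β_{ℓ−1}(σ') = ∑_σ ∑_{b : σ' ∨ (b ∧ a_ℓ) = σ} β_ℓ(σ) π(b)` (the column used on the trellis
section from depth `ℓ−1` to depth `ℓ` being `a (ℓ−1)`, zero-indexed).
`Q : (Fin m → Bool) → ℝ` is the likelihood `σ ↦ Q(t|σ)` of the fixed observed test result. -/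
noncomputable def fedgtBetaRev (m n : ℕ) (a : ℕ → Fin m → Bool) (δ : ℝ)
    (Q : (Fin m → Bool) → ℝ) : ℕ → (Fin m → Bool) → ℝ
  | 0 => Q
  | k + 1 => fun σ' => ∑ σ : Fin m → Bool, ∑ b : Bool,
      if (fun i => σ' i || (b && a (n - (k + 1)) i)) = σ
      then fedgtBetaRev m n a δ Q k σ * fedgtPrior δ b else 0

/-- Backward metric at depth `ℓ`. -/
noncomputable def fedgtBeta (m n : ℕ) (a : ℕ → Fin m → Bool) (δ : ℝ)
    (Q : (Fin m → Bool) → ℝ) (ℓ : ℕ) : (Fin m → Bool) → ℝ :=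
  fedgtBetaRev m n a δ Q (n - ℓ)

lemma fedgt_sup_filter {ι : Type*} [DecidableEq ι] (s : Finset ι) (p d : ι → Bool) :
    s.sup (fun j => d j && p j) = (s.filter fun j => p j = true).sup d := by
  induction s using Finset.induction with
  | empty => simp
  | @insert x s h ih =>
      rw [Finset.sup_insert, Finset.filter_insert, ih]
      by_cases hp : p x = true
      · simp [hp, Bool.and_true]
      · rw [Bool.not_eq_true] at hp
        simp [hp]

lemma fedgt_sup_univ_succ {k : ℕ} (f : Fin (k + 1) → Bool) :
    Finset.univ.sup f = f 0 ⊔ Finset.univ.sup (f ∘ Fin.succ) := by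
  rw [Fin.univ_succ]
  simp [Finset.sup_map, Function.comp]

lemma fedgt_betaRev_eq (m n : ℕ) (a : ℕ → Fin m → Bool) (δ : ℝ)
    (Q : (Fin m → Bool) → ℝ) :
    ∀ k : ℕ, k ≤ n → ∀ σ' : Fin m → Bool,
      fedgtBetaRev m n a δ Q k σ'
        = ∑ d : Fin k → Bool,
            (∏ j : Fin k, fedgtPrior δ (d j)) *
              Q (fun i => σ' i || Finset.univ.sup fun j : Fin k => d j && a (n - k + (j : ℕ)) i) := by
  intro k
  induction k with
  | zero =>
      intro _ σ'
      simp [fedgtBetaRev]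
  | succ k ih =>
      intro hk σ'
      have hk' : k ≤ n := Nat.le_of_succ_le hk
      rw [fedgtBetaRev]
      beta_reduce
      rw [Finset.sum_comm]
      simp only [Finset.sum_ite_eq, Finset.mem_univ, if_true]
      -- now : ∑ b, fedgtBetaRev ... k (fun i => σ' i || (b && a (n-(k+1)) i)) * fedgtPrior δ b
      have key : ∀ b : Bool,
          fedgtBetaRev m n a δ Q k (fun i => σ' i || (b && a (n - (k + 1)) i))
            = ∑ d : Fin k → Bool,
                (∏ j : Fin k, fedgtPrior δ (d j)) *
                  Q (fun i => σ' i || ((b && a (n - (k+1)) i) ||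
                    Finset.univ.sup fun j : Fin k => d j && a (n - (k+1) + ((j : ℕ) + 1)) i)) := by
        intro b
        rw [ih hk']
        apply Finset.sum_congr rfl
        intro d _
        congr 1
        congr 1
        funext i
        rw [Bool.or_assoc]
        congr 2
        apply Finset.sup_congr rfl
        intro j _
        congr 2
        omega
      simp only [key, Finset.mul_sum, Finset.sum_mul]
      rw [← Fintype.sum_prod_type']
      rw [← (Fin.consEquiv (fun _ : Fin (k+1) => Bool)).sum_comp]
      apply Finset.sum_congr rfl
      intro bd _
      obtain ⟨b, d⟩ := bd
      simp only [Fin.consEquiv_apply]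
      rw [Fin.prod_univ_succ]
      simp only [Fin.cons_zero, Fin.cons_succ]
      have hQ : (fun i => σ' i || ((b && a (n - (k+1)) i) ||
            Finset.univ.sup fun j : Fin k => d j && a (n - (k+1) + ((j : ℕ) + 1)) i))
          = (fun i => σ' i ||
            Finset.univ.sup fun j : Fin (k+1) => (Fin.cons b d : Fin (k+1) → Bool) j && a (n - (k+1) + (j : ℕ)) i) := by
        funext i
        rw [fedgt_sup_univ_succ (f := fun j : Fin (k+1) => (Fin.cons b d : Fin (k+1) → Bool) j && a (n - (k+1) + (j : ℕ)) i)]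
        simp [Function.comp_def, Fin.cons_succ, Fin.val_succ]
      rw [hQ]
      ring

/-- **Backward metric = expected likelihood over suffixes.** For every `ℓ ≤ n` and
state `σ'`, `β_ℓ(σ') = ∑_{(d_{ℓ+1},…,d_n)} (∏ π(dᵢ)) · Q(t | σ' ∨ ⋁_{i>ℓ} (dᵢ ∧ aᵢ))`;
in particular `β₀` evaluated at the all-zero state equals
`Pr(T = t) = ∑_d (∏ π(dᵢ)) Q(t | s(d))`. Here `Qk t` plays the role of `Q(t|·)` for a
noisy-test model `Qk` on a finite outcome set `𝒯` with `∑_t Qk t σ = 1` for each `σ`. -/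
theorem fedgt_beta_eq (m n : ℕ) (a : ℕ → Fin m → Bool) (δ : ℝ)
    (hδ0 : 0 < δ) (hδ1 : δ < 1)
    (𝒯 : Type*) [Fintype 𝒯] (Qk : 𝒯 → (Fin m → Bool) → ℝ)
    (hQnn : ∀ t σ, 0 ≤ Qk t σ) (hQsum : ∀ σ, ∑ t, Qk t σ = 1) (t : 𝒯) :
    (∀ ℓ : ℕ, ℓ ≤ n → ∀ σ' : Fin m → Bool,
      fedgtBeta m n a δ (Qk t) ℓ σ'
        = ∑ d : Fin (n - ℓ) → Bool,
            (∏ k : Fin (n - ℓ), fedgtPrior δ (d k)) *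
              Qk t (fun i =>
                σ' i || Finset.univ.sup fun k : Fin (n - ℓ) => d k && a (ℓ + (k : ℕ)) i)) ∧
    fedgtBeta m n a δ (Qk t) 0 (fun _ => false)
      = ∑ d : Fin n → Bool,
          (∏ j : Fin n, fedgtPrior δ (d j)) *
            Qk t (fun i =>
              (Finset.univ.filter fun j : Fin n => a (j : ℕ) i = true).sup fun j => d j) := by
  constructor
  · intro ℓ hℓ σ'
    rw [fedgtBeta, fedgt_betaRev_eq m n a δ (Qk t) (n - ℓ) (Nat.sub_le n ℓ) σ']
    simp only [Nat.sub_sub_self hℓ]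
  · rw [fedgtBeta, fedgt_betaRev_eq m n a δ (Qk t) (n - 0) (Nat.sub_le n 0)]
    apply Finset.sum_congr rfl
    intro d _
    congr 1
    congr 1
    funext i
    simp only [Bool.false_or, Nat.sub_sub_self (Nat.zero_le n), Nat.sub_self, Nat.zero_add, zero_add,
      Nat.sub_zero]
    exact fedgt_sup_filter Finset.univ (fun j : Fin n => a (j : ℕ) i) d
end

section
/- Let X be a finite set, let p_0 and p_1 be probability mass functions on X, let λ > 0, and let A_LRT = {x ∈ X : p_1(x) > λ p_0(x)}. Then for every subset A ⊆ X: Σ_{x∈A_LRT} p_1(x) − Σ_{x∈A} p_1(x) ≥ λ · (Σ_{x∈A_LRT} p_0(x) − Σ_{x∈A} p_0(x)). -/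
/-!
The likelihood-ratio test maximises `P_D - λ P_FA = ∑_{x ∈ A} (p₁ x - λ p₀ x)` over all tests `A`,
since it keeps exactly the points where the summand is positive.
-/

open Finset

theorem Finset.sum_le_sum_filter_pos {ι M : Type*} [Fintype ι] [AddCommMonoid M] [LinearOrder M]
    [IsOrderedAddMonoid M] (f : ι → M) (s : Finset ι) :
    ∑ i ∈ s, f i ≤ ∑ i ∈ univ.filter (fun i => 0 < f i), f i := by
  calc ∑ i ∈ s, f i
      ≤ ∑ i ∈ s, if 0 < f i then f i else 0 :=
        sum_le_sum fun i _ => by split_ifs with h; exacts [le_rfl, not_lt.mp h]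
    _ = ∑ i ∈ s.filter (fun i => 0 < f i), f i := (sum_filter _ _).symm
    _ ≤ ∑ i ∈ univ.filter (fun i => 0 < f i), f i :=
        sum_le_sum_of_subset_of_nonneg (filter_subset_filter _ (subset_univ s))
          fun i hi _ => (mem_filter.mp hi).2.le

theorem neyman_pearson_quantitative_general {X : Type*} [Fintype X] (p0 p1 : X → ℝ)
    (lam : ℝ)
    (A : Finset X) :
    lam * ((∑ x ∈ Finset.univ.filter fun x => lam * p0 x < p1 x, p0 x) - ∑ x ∈ A, p0 x)
      ≤ (∑ x ∈ Finset.univ.filter fun x => lam * p0 x < p1 x, p1 x) - ∑ x ∈ A, p1 x := by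
  have h := sum_le_sum_filter_pos (fun x => p1 x - lam * p0 x) A
  simp only [sub_pos, sum_sub_distrib, ← mul_sum] at h
  linarith

/-- Quantitative Neyman–Pearson inequality: on a finite observation space `X` with
probability mass functions `p₀, p₁`, `λ > 0`, and `A_LRT = {x : p₁(x) > λ p₀(x)}`, for
every test `A ⊆ X` the gain in detection probability of the LRT over `A` is at least `λ`
times the gain in false-alarm probability:
`P_D(A_LRT) − P_D(A) ≥ λ (P_FA(A_LRT) − P_FA(A))`. -/
theorem neyman_pearson_quantitative {X : Type*} [Fintype X] (p0 p1 : X → ℝ)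
    (h0 : ∀ x, 0 ≤ p0 x) (h1 : ∀ x, 0 ≤ p1 x)
    (hs0 : ∑ x, p0 x = 1) (hs1 : ∑ x, p1 x = 1)
    (lam : ℝ) (hlam : 0 < lam)
    (A : Finset X) :
    lam * ((∑ x ∈ Finset.univ.filter fun x => lam * p0 x < p1 x, p0 x) - ∑ x ∈ A, p0 x)
      ≤ (∑ x ∈ Finset.univ.filter fun x => lam * p0 x < p1 x, p1 x) - ∑ x ∈ A, p1 x :=
  neyman_pearson_quantitative_general p0 p1 lam A
end
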